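/- In a recollement of abelian categories R(A', A, A''), given torsion pairs (X', Y') in A' and (X'', Y'') in A'', the pair (X, Y) defined by X = {A ∈ A : q(A) ∈ X', π(A) ∈ X''} and Y = {A ∈ A : p(A) ∈ Y', π(A) ∈ Y''} is a torsion pair in A which is compatible with the recollement (i.e., ℓπ(X) ⊆ X and rπ(Y) ⊆ Y). -/

import Mathlib

open CategoryTheory CategoryTheory.Limits CategoryTheory.Pretriangulated
  CategoryTheory.Triangulated ZeroObject

namespace Paper

universe w w' v u v₁ u₁ v₂ u₂ v₃ u₃ v₄ u₄

section AbelianPrelim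

variable {C : Type u} [Category.{v} C]

/-- A Serre subcategory of an abelian category, as a predicate on objects:
closed under zero, isomorphisms, and for every short exact sequence the middle
term belongs to it iff the outer terms do (subobjects, quotients, extensions). -/
structure IsSerre [Abelian C] (P : C → Prop) : Prop where
  zero : ∀ X : C, IsZero X → P X
  iso_closed : ∀ {X Y : C}, (X ≅ Y) → P X → P Y
  ses : ∀ S : ShortComplex C, S.ShortExact → (P S.X₂ ↔ P S.X₁ ∧ P S.X₃)

/-- A torsion pair `(T, F)` on an abelian category: `Hom(T,F) = 0` and every object
is an extension of a torsion-free object by a torsion object. -/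
structure IsTorsionPair [Abelian C] (T F : C → Prop) : Prop where
  t_iso : ∀ {X Y : C}, (X ≅ Y) → T X → T Y
  f_iso : ∀ {X Y : C}, (X ≅ Y) → F X → F Y
  hom_zero : ∀ {X Y : C}, T X → F Y → ∀ f : X ⟶ Y, f = 0
  exists_ses : ∀ X : C, ∃ (A B : C) (f : A ⟶ X) (g : X ⟶ B) (w : f ≫ g = 0),
    T A ∧ F B ∧ (ShortComplex.mk f g w).ShortExact

end AbelianPrelim

/-- Essential image of a functor, as a predicate. -/
def EssIm {C : Type u} [Category.{v} C] {D : Type u₁} [Category.{v₁} D]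
    (F : C ⥤ D) (Y : D) : Prop := ∃ X : C, Nonempty (F.obj X ≅ Y)

/-- Essential image of a subcategory (predicate) under a functor. -/
def ImP {C : Type u} [Category.{v} C] {D : Type u₁} [Category.{v₁} D]
    (F : C ⥤ D) (P : C → Prop) (Y : D) : Prop := ∃ X : C, P X ∧ Nonempty (F.obj X ≅ Y)

/-- A recollement `R(A', A, A'')`: adjoint triples `(q, ι, p)` and `(l, π, r)`,
with `ι, l, r` fully faithful and `Im ι = Ker π`. -/
structure RecollementData (A' : Type u) (A : Type u₁) (A'' : Type u₂)
    [Category.{v} A'] [Category.{v₁} A] [Category.{v₂} A''] where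
  ι : A' ⥤ A
  π : A ⥤ A''
  q : A ⥤ A'
  p : A ⥤ A'
  l : A'' ⥤ A
  r : A'' ⥤ A
  adj_q : q ⊣ ι
  adj_p : ι ⊣ p
  adj_l : l ⊣ π
  adj_r : π ⊣ r
  ι_full : ι.Full
  ι_faithful : ι.Faithful
  l_full : l.Full
  l_faithful : l.Faithful
  r_full : r.Full
  r_faithful : r.Faithful
  im_eq_ker : ∀ X : A, EssIm ι X ↔ IsZero (π.obj X)

section TriPrelim

variable {D : Type u} [Category.{v} D] [Preadditive D] [HasZeroObject D] [HasShift D ℤ]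
  [∀ n : ℤ, (shiftFunctor D n).Additive] [Pretriangulated D]

/-- The heart of a t-structure, as a predicate on objects. -/
def heartP (t : TStructure D) (X : D) : Prop := t.le 0 X ∧ t.ge 0 X

/-- Boundedness of a t-structure. -/
def IsBoundedT (t : TStructure D) : Prop := ∀ X : D, ∃ a b : ℤ, t.le b X ∧ t.ge a X

/-- A simple object of the abelian subquotient determined by the heart-like
predicate `H`: any "short exact sequence" in `H` (i.e. distinguished triangle
with all terms in `H`) with middle term `X` is trivial. -/
def SimpleIn (H : D → Prop) (X : D) : Prop :=
  H X ∧ ¬ IsZero X ∧ ∀ (A B : D) (f : A ⟶ X) (g : X ⟶ B) (h : B ⟶ A⟦(1 : ℤ)⟧),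
    H A → H B → Triangle.mk f g h ∈ (distTriang D) → IsZero A ∨ IsZero B

/-- A torsion pair `(T, F)` on the heart-like predicate `H` of a triangulated
category, where short exact sequences in `H` are distinguished triangles. -/
structure TorsionPairIn (H T F : D → Prop) : Prop where
  t_sub : ∀ X : D, T X → H X
  f_sub : ∀ X : D, F X → H X
  t_iso : ∀ {X Y : D}, (X ≅ Y) → T X → T Y
  f_iso : ∀ {X Y : D}, (X ≅ Y) → F X → F Y
  hom_zero : ∀ {X Y : D}, T X → F Y → ∀ f : X ⟶ Y, f = 0
  exists_triangle : ∀ X : D, H X → ∃ (A B : D) (f : A ⟶ X) (g : X ⟶ B)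
    (h : B ⟶ A⟦(1 : ℤ)⟧), T A ∧ F B ∧ Triangle.mk f g h ∈ distTriang D

/-- The forward HRS tilt `F[1] * T` of a heart at a torsion pair `(T, F)`. -/
def TiltSharp (T F : D → Prop) (E : D) : Prop :=
  ∃ (A B : D) (f : A⟦(1 : ℤ)⟧ ⟶ E) (g : E ⟶ B) (h : B ⟶ A⟦(1 : ℤ)⟧⟦(1 : ℤ)⟧),
    F A ∧ T B ∧ Triangle.mk f g h ∈ distTriang D

/-- The backward HRS tilt `F * T[-1]` of a heart at a torsion pair `(T, F)`. -/
def TiltFlat (T F : D → Prop) (E : D) : Prop :=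
  ∃ (A B : D) (f : A ⟶ E) (g : E ⟶ B⟦(-1 : ℤ)⟧) (h : B⟦(-1 : ℤ)⟧ ⟶ A⟦(1 : ℤ)⟧),
    F A ∧ T B ∧ Triangle.mk f g h ∈ distTriang D

/-- `P` is a Serre subcategory of the heart-like predicate `H`, where short
exact sequences in `H` are distinguished triangles with all terms in `H`. -/
def SerreIn (H P : D → Prop) : Prop :=
  (∀ X : D, P X → H X) ∧ (∀ X : D, IsZero X → H X → P X) ∧
  (∀ {X Y : D}, (X ≅ Y) → P X → P Y) ∧
  ∀ (A E B : D) (f : A ⟶ E) (g : E ⟶ B) (h : B ⟶ A⟦(1 : ℤ)⟧),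
    H A → H E → H B → Triangle.mk f g h ∈ (distTriang D) → (P E ↔ P A ∧ P B)

/-- A thick (triangulated, closed under retracts) subcategory, as a predicate. -/
structure IsThick (V : D → Prop) : Prop where
  zero : ∀ X : D, IsZero X → V X
  iso : ∀ {X Y : D}, (X ≅ Y) → V X → V Y
  shift : ∀ (X : D) (n : ℤ), V X → V (X⟦n⟧)
  ext : ∀ (A E B : D) (f : A ⟶ E) (g : E ⟶ B) (h : B ⟶ A⟦(1 : ℤ)⟧),
    Triangle.mk f g h ∈ (distTriang D) → V A → V B → V E
  retract : ∀ (X Z : D) (i : X ⟶ Z) (p : Z ⟶ X), i ≫ p = 𝟙 X → V Z → V X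

/-- The t-structure `t` restricts to the subcategory `V`: truncation triangles of
objects of `V` may be chosen inside `V`. -/
def RestrictsTo (t : TStructure D) (V : D → Prop) : Prop :=
  ∀ A : D, V A → ∃ (X Y : D), t.le 0 X ∧ t.ge 1 Y ∧ V X ∧ V Y ∧
    ∃ (f : X ⟶ A) (g : A ⟶ Y) (h : Y ⟶ X⟦(1 : ℤ)⟧), Triangle.mk f g h ∈ distTriang D

/-- A bounded heart `heartP t` is compatible with `V`: the t-structure restricts to
`V` (so that `heartP t ∩ V` is a bounded heart of `V`) and `heartP t ∩ V` is a
Serre subcategory of `heartP t`. -/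
def CompatibleWith (t : TStructure D) (V : D → Prop) : Prop :=
  RestrictsTo t V ∧ SerreIn (heartP t) (fun X => heartP t X ∧ V X)

/-- Finite length objects of the heart-like predicate `H`: finite iterated
extensions of simple objects of `H`. -/
inductive FinLength (H : D → Prop) : D → Prop
  | zero (X : D) : IsZero X → FinLength H X
  | step (A X B : D) (f : A ⟶ X) (g : X ⟶ B) (h : B ⟶ A⟦(1 : ℤ)⟧) :
      SimpleIn H B → Triangle.mk f g h ∈ (distTriang D) → FinLength H A → FinLength H X

/-- The heart of `t` is a finite (length, with finitely many simples) abelian category. -/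
def FiniteHeart (t : TStructure D) : Prop :=
  (∃ (n : ℕ) (Sim : Fin n → D), ∀ X : D, SimpleIn (heartP t) X → ∃ i, Nonempty (X ≅ Sim i)) ∧
  ∀ X : D, heartP t X → FinLength (heartP t) X

/-- The additive closure (finite direct sums, retracts) of a class of objects. -/
inductive AddClos [HasBinaryBiproducts D] (S : D → Prop) : D → Prop
  | of (X : D) : S X → AddClos S X
  | zero (X : D) : IsZero X → AddClos S X
  | biprod (X Y : D) : AddClos S X → AddClos S Y → AddClos S (X ⊞ Y)
  | retract (X Z : D) (i : X ⟶ Z) (p : Z ⟶ X) : i ≫ p = 𝟙 X → AddClos S Z → AddClos S X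

/-- The class `⟨S⟩` generated by an object `S`: extensions of `Add S` by `Add S`. -/
def GenBy [HasBinaryBiproducts D] (S : D) (X : D) : Prop :=
  ∃ (A B : D) (f : A ⟶ X) (g : X ⟶ B) (h : B ⟶ A⟦(1 : ℤ)⟧),
    AddClos (fun Z => Z = S) A ∧ AddClos (fun Z => Z = S) B ∧
    Triangle.mk f g h ∈ distTriang D

/-- `t'` is the simple forward HRS tilt of `t` at the simple object `S` of its heart. -/
def SimpleForwardTiltRel [HasBinaryBiproducts D] (t t' : TStructure D) (S : D) : Prop :=
  SimpleIn (heartP t) S ∧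
  ∃ T : D → Prop, TorsionPairIn (heartP t) T (GenBy S) ∧
    ∀ X : D, heartP t' X ↔ TiltSharp T (GenBy S) X

/-- The thick closure of a class of objects. -/
inductive ThickClos (S : D → Prop) : D → Prop
  | of (X : D) : S X → ThickClos S X
  | zero (X : D) : IsZero X → ThickClos S X
  | shift (X : D) (n : ℤ) : ThickClos S X → ThickClos S (X⟦n⟧)
  | ext (A E B : D) (f : A ⟶ E) (g : E ⟶ B) (h : B ⟶ A⟦(1 : ℤ)⟧) :
      Triangle.mk f g h ∈ (distTriang D) → ThickClos S A → ThickClos S B → ThickClos S E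
  | retract (X Z : D) (i : X ⟶ Z) (p : Z ⟶ X) : i ≫ p = 𝟙 X → ThickClos S Z → ThickClos S X

/-- `π : D ⥤ Q` realizes `Q` as the Verdier quotient of `D` by the thick
subcategory `V`. -/
structure IsVerdierQuotient {Q : Type u₁} [Category.{v₁} Q] [Preadditive Q]
    [HasZeroObject Q] [HasShift Q ℤ] [∀ n : ℤ, (shiftFunctor Q n).Additive]
    [Pretriangulated Q] (π : D ⥤ Q) (V : D → Prop) : Prop where
  essSurj : ∀ Y : Q, ∃ X : D, Nonempty (π.obj X ≅ Y)
  kernel : ∀ X : D, IsZero (π.obj X) ↔ V X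
  inverts : ∀ (X Y : D) (f : X ⟶ Y) (Z : D) (g : Y ⟶ Z) (h : Z ⟶ X⟦(1 : ℤ)⟧),
    Triangle.mk f g h ∈ (distTriang D) → V Z → IsIso (π.map f)

end TriPrelim

section TExact

variable {D : Type u} [Category.{v} D] [Preadditive D] [HasZeroObject D] [HasShift D ℤ]
  [∀ n : ℤ, (shiftFunctor D n).Additive] [Pretriangulated D]
  {E : Type u₁} [Category.{v₁} E] [Preadditive E] [HasZeroObject E] [HasShift E ℤ]
  [∀ n : ℤ, (shiftFunctor E n).Additive] [Pretriangulated E]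

/-- t-exactness of a functor with respect to t-structures on source and target. -/
def TExact (F : D ⥤ E) (t : TStructure D) (t' : TStructure E) : Prop :=
  (∀ X : D, t.le 0 X → t'.le 0 (F.obj X)) ∧ (∀ X : D, t.ge 0 X → t'.ge 0 (F.obj X))

end TExact

/-- An isomorphism of oriented graphs. -/
structure OGraphIso {V₁ : Type u} {V₂ : Type u₁}
    (E₁ : V₁ → V₁ → Prop) (E₂ : V₂ → V₂ → Prop) where
  toEquiv : V₁ ≃ V₂
  edge_iff : ∀ a b : V₁, E₁ a b ↔ E₂ (toEquiv a) (toEquiv b)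

end Paper

open Paper

universe v u v₁ u₁ v₂ u₂

/-!
Both glued classes are orthogonals: by the adjunctions, `X` is the left orthogonal of
`ι Y' ∪ r Y''` and `Y` the right orthogonal of `ι X' ∪ l X''`. Hence `X` is closed under
quotients and extensions and `Y` under subobjects. An object of `X ∩ Y` is killed by `π`, so it
lies in `ι A'`, where it belongs to `X' ∩ Y'` and vanishes; applied to the image of a morphism
this gives `Hom(X, Y) = 0`.

For the torsion sequence of `a`, let `x''` be the torsion part of `π a` and `c` the cokernel of
`l x'' ⟶ a`, so that `π c` is the torsion-free part of `π a`. Then let `x'` be the torsion part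
of `p c` and `e` the cokernel of `ι x' ⟶ c`. Every morphism from `ι X'` to `c` factors through
`ι x'`, and `ι X'` is closed under extensions, so `Hom(ι X', e) = 0`, i.e. `e ∈ Y`. The kernel of
`a ⟶ e` is an extension of quotients of `l x''` and `ι x'`, hence lies in `X`.
-/

namespace CategoryTheory

open Limits

namespace ObjectProperty

section

variable {C : Type*} [Category C]

instance (P Q : ObjectProperty C) [P.IsClosedUnderQuotients] [Q.IsClosedUnderQuotients] :
    (P ⊓ Q).IsClosedUnderQuotients where
  prop_of_epi f _ h := ⟨P.prop_of_epi f h.1, Q.prop_of_epi f h.2⟩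

instance (P Q : ObjectProperty C) [P.IsClosedUnderSubobjects] [Q.IsClosedUnderSubobjects] :
    (P ⊓ Q).IsClosedUnderSubobjects where
  prop_of_mono f _ h := ⟨P.prop_of_mono f h.1, Q.prop_of_mono f h.2⟩

instance [HasZeroMorphisms C] (P Q : ObjectProperty C) [P.IsClosedUnderExtensions]
    [Q.IsClosedUnderExtensions] : (P ⊓ Q).IsClosedUnderExtensions where
  prop_X₂_of_shortExact hS h₁ h₃ :=
    ⟨P.prop_X₂_of_shortExact hS h₁.1 h₃.1, Q.prop_X₂_of_shortExact hS h₁.2 h₃.2⟩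

instance [HasZeroMorphisms C] (P : ObjectProperty C) :
    P.leftOrthogonal.IsClosedUnderQuotients where
  prop_of_epi f _ h _ g hY := by
    rw [← cancel_epi f, comp_zero]
    exact h _ hY

instance [HasZeroMorphisms C] (P : ObjectProperty C) :
    P.rightOrthogonal.IsClosedUnderSubobjects where
  prop_of_mono f _ h _ g hX := by
    rw [← cancel_mono f, zero_comp]
    exact h _ hX

instance [Preadditive C] [Balanced C] (P : ObjectProperty C) :
    P.leftOrthogonal.IsClosedUnderExtensions where
  prop_X₂_of_shortExact {S} hS h₁ h₃ Y g hY := by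
    obtain ⟨g', hg'⟩ := CokernelCofork.IsColimit.desc' hS.gIsCokernel g (h₁ _ hY)
    rw [← hg', h₃ g' hY, comp_zero]

end

end ObjectProperty

section

variable {C : Type*} [Category C] [Abelian C]

lemma shortExact_kernel {X Y : C} (g : X ⟶ Y) [Epi g] :
    (ShortComplex.mk (kernel.ι g) g (kernel.condition g)).ShortExact :=
  { exact := ShortComplex.exact_kernel g }

lemma shortExact_kernel_comp {X Y Z : C} (f : X ⟶ Y) (g : Y ⟶ Z) [Epi f] :
    (ShortComplex.mk (kernel.map f (f ≫ g) (𝟙 _) g (by simp))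
      (kernel.map (f ≫ g) g f (𝟙 _) (by simp)) (by ext; simp)).ShortExact := by
  have hE := kernelCokernelCompSequence_exact f g
  refine { exact := hE.exact 0, mono_f := ?_, epi_g := ?_ }
  · dsimp; infer_instance
  · exact (hE.exact 1).epi_f ((isZero_cokernel_of_epi f).eq_of_tgt _ _)

namespace ShortComplex.ShortExact

lemma pullback_snd {S : ShortComplex C} (hS : S.ShortExact) {Y : C} (h : Y ⟶ S.X₃) :
    (ShortComplex.mk (pullback.lift S.f 0 (by rw [S.zero, zero_comp])) (pullback.snd S.g h)
      (pullback.lift_snd _ _ _)).ShortExact := by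
  have := hS.mono_f
  have := hS.epi_g
  refine { exact := ?_, mono_f := mono_of_mono_fac (pullback.lift_fst _ _ _) }
  rw [ShortComplex.exact_iff_exact_up_to_refinements]
  intro A x₂ hx₂
  dsimp at x₂ hx₂
  obtain ⟨A', π, hπ, x₁, fac⟩ := hS.exact.exact_up_to_refinements (x₂ ≫ pullback.fst _ _)
    (by rw [Category.assoc, pullback.condition, reassoc_of% hx₂, zero_comp])
  exact ⟨A', π, hπ, x₁, pullback.hom_ext
    (by rw [Category.assoc, Category.assoc, pullback.lift_fst]; exact fac)
    (by rw [Category.assoc, Category.assoc, pullback.lift_snd, hx₂, comp_zero, comp_zero])⟩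

/-- The pullback of `S.g` along `h : b ⟶ S.X₃` is an extension of `b` by `S.X₁`, hence lies
in `B`, and on it `h` lifts to `S.X₂`. -/
lemma rightOrthogonal_X₃ {B : ObjectProperty C} [B.IsClosedUnderExtensions]
    {S : ShortComplex C} (hS : S.ShortExact) (h₁ : B S.X₁)
    (hB : ∀ ⦃b : C⦄ (g : b ⟶ S.X₂), B b → g ≫ S.g = 0) : B.rightOrthogonal S.X₃ := by
  intro b h hb
  have hP := hS.pullback_snd h
  have := hP.epi_g
  rw [← cancel_epi (pullback.snd S.g h), ← pullback.condition,
    hB _ (B.prop_X₂_of_shortExact hP h₁ hb), comp_zero]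

end ShortComplex.ShortExact

end

namespace Adjunction

variable {C D : Type*} [Category C] [Category D] [HasZeroMorphisms C] [HasZeroMorphisms D]
  {F : C ⥤ D} {G : D ⥤ C}

lemma homEquiv_eq_zero_iff (adj : F ⊣ G) {X : C} {Y : D} (f : F.obj X ⟶ Y) :
    adj.homEquiv X Y f = 0 ↔ f = 0 := by
  have := adj.isRightAdjoint
  have h0 : adj.homEquiv X Y 0 = 0 := by simp [homEquiv_unit]
  exact ⟨fun h => (adj.homEquiv X Y).injective (h.trans h0.symm), by rintro rfl; exact h0⟩

lemma inverseImage_leftOrthogonal (adj : F ⊣ G) (P : ObjectProperty D) :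
    P.leftOrthogonal.inverseImage F = (P.strictMap G).leftOrthogonal := by
  ext X
  constructor
  · rintro h _ f ⟨Y, hY⟩
    rw [← (adj.homEquiv X Y).apply_symm_apply f, adj.homEquiv_eq_zero_iff]
    exact h _ hY
  · intro h Y f hY
    rw [← adj.homEquiv_eq_zero_iff]
    exact h _ (P.strictMap_obj G hY)

lemma inverseImage_rightOrthogonal (adj : F ⊣ G) (P : ObjectProperty C) :
    P.rightOrthogonal.inverseImage G = (P.strictMap F).rightOrthogonal := by
  ext Y
  constructor
  · rintro h _ f ⟨X, hX⟩
    rw [← adj.homEquiv_eq_zero_iff]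
    exact h _ hX
  · intro h X f hX
    rw [← (adj.homEquiv X Y).apply_symm_apply f, adj.homEquiv_eq_zero_iff]
    exact h _ (P.strictMap_obj F hX)

end Adjunction

end CategoryTheory

namespace Paper

open CategoryTheory Limits ObjectProperty

namespace IsTorsionPair

variable {C : Type*} [Category C] [Abelian C] {T F : ObjectProperty C}

lemma eq_leftOrthogonal (h : IsTorsionPair T F) : T = F.leftOrthogonal := by
  ext M
  refine ⟨fun hM _ f hZ => h.hom_zero hM hZ f, fun hM => ?_⟩
  obtain ⟨A, B, f, g, w, hA, hB, hS⟩ := h.exists_ses M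
  have := hS.mono_f
  have := hS.epi_g
  have : Epi f := hS.exact.epi_f (hM g hB)
  have : IsIso f := isIso_of_mono_of_epi f
  exact h.t_iso (asIso f) hA

lemma eq_rightOrthogonal (h : IsTorsionPair T F) : F = T.rightOrthogonal := by
  ext M
  refine ⟨fun hM _ f hZ => h.hom_zero hZ hM f, fun hM => ?_⟩
  obtain ⟨A, B, f, g, w, hA, hB, hS⟩ := h.exists_ses M
  have := hS.mono_f
  have := hS.epi_g
  have : Mono g := hS.exact.mono_g (hM f hA)
  have : IsIso g := isIso_of_mono_of_epi g
  exact h.f_iso (asIso g).symm hB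

lemma isClosedUnderQuotients (h : IsTorsionPair T F) : T.IsClosedUnderQuotients := by
  rw [h.eq_leftOrthogonal]
  infer_instance

lemma isClosedUnderExtensions (h : IsTorsionPair T F) : T.IsClosedUnderExtensions := by
  rw [h.eq_leftOrthogonal]
  infer_instance

lemma isClosedUnderSubobjects (h : IsTorsionPair T F) : F.IsClosedUnderSubobjects := by
  rw [h.eq_rightOrthogonal]
  infer_instance

lemma prop_of_isZero (h : IsTorsionPair T F) {X : C} (hX : IsZero X) : T X :=
  h.eq_leftOrthogonal ▸ fun _ _ _ => hX.eq_of_src _ _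

lemma isZero_of_prop_of_prop (h : IsTorsionPair T F) {X : C} (hT : T X) (hF : F X) :
    IsZero X :=
  (IsZero.iff_id_eq_zero X).2 (h.hom_zero hT hF _)

variable {D : Type*} [Category D] {U : D ⥤ C} {V : C ⥤ D}

lemma inverseImage_eq_leftOrthogonal [HasZeroMorphisms D] (h : IsTorsionPair T F)
    (adj : U ⊣ V) : T.inverseImage U = (F.strictMap V).leftOrthogonal := by
  rw [h.eq_leftOrthogonal, adj.inverseImage_leftOrthogonal]

lemma inverseImage_eq_rightOrthogonal [HasZeroMorphisms D] (h : IsTorsionPair T F)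
    (adj : V ⊣ U) : F.inverseImage U = (T.strictMap V).rightOrthogonal := by
  rw [h.eq_rightOrthogonal, adj.inverseImage_rightOrthogonal]

lemma isClosedUnderExtensions_inverseImage [Abelian D] (h : IsTorsionPair T F) (adj : U ⊣ V) :
    (T.inverseImage U).IsClosedUnderExtensions := by
  rw [h.inverseImage_eq_leftOrthogonal adj]
  infer_instance

end IsTorsionPair

namespace RecollementData

variable {A' A A'' : Type*} [Category A'] [Category A] [Category A'']
  (R : RecollementData A' A A'')

instance : R.ι.Full := R.ι_full
instance : R.ι.Faithful := R.ι_faithful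
instance : R.l.Full := R.l_full
instance : R.l.Faithful := R.l_faithful
instance : R.r.Full := R.r_full
instance : R.r.Faithful := R.r_faithful
instance : R.q.IsLeftAdjoint := R.adj_q.isLeftAdjoint
instance : R.p.IsRightAdjoint := R.adj_p.isRightAdjoint

instance : PreservesFiniteLimits R.π :=
  have := R.adj_l.rightAdjoint_preservesLimits
  PreservesLimitsOfSize.preservesFiniteLimits.{0, 0} _

instance : PreservesFiniteColimits R.π :=
  have := R.adj_r.leftAdjoint_preservesColimits
  PreservesColimitsOfSize.preservesFiniteColimits.{0, 0} _

def gluedTorsion (X' : ObjectProperty A') (X'' : ObjectProperty A'') : ObjectProperty A :=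
  X'.inverseImage R.q ⊓ X''.inverseImage R.π

def gluedTorsionFree (Y' : ObjectProperty A') (Y'' : ObjectProperty A'') : ObjectProperty A :=
  Y'.inverseImage R.p ⊓ Y''.inverseImage R.π

lemma isZero_π_obj_ι_obj (x : A') : IsZero (R.π.obj (R.ι.obj x)) :=
  (R.im_eq_ker _).1 ⟨x, ⟨Iso.refl _⟩⟩

lemma map_ι_eq (X' : ObjectProperty A') [X'.IsClosedUnderIsomorphisms] :
    X'.map R.ι = X'.inverseImage R.q ⊓ ObjectProperty.inverseImage (IsZero (C := A'')) R.π := by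
  ext b
  constructor
  · rintro ⟨x, hx, ⟨e⟩⟩
    exact ⟨X'.prop_of_iso ((asIso (R.adj_q.counit.app x)).symm ≪≫ R.q.mapIso e) hx,
      (R.isZero_π_obj_ι_obj x).of_iso (R.π.mapIso e).symm⟩
  · rintro ⟨hq, hπ⟩
    obtain ⟨x, ⟨e⟩⟩ := (R.im_eq_ker b).2 hπ
    exact ⟨x, X'.prop_of_iso (R.q.mapIso e.symm ≪≫ asIso (R.adj_q.counit.app x)) hq, ⟨e⟩⟩

variable {X' Y' : ObjectProperty A'} {X'' Y'' : ObjectProperty A''}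

lemma ι_obj_mem_gluedTorsion [Abelian A''] [X'.IsClosedUnderIsomorphisms]
    (h'' : IsTorsionPair X'' Y'') {x : A'} (hx : X' x) : R.gluedTorsion X' X'' (R.ι.obj x) :=
  ⟨X'.prop_of_iso (asIso (R.adj_q.counit.app x)).symm hx,
    h''.prop_of_isZero (R.isZero_π_obj_ι_obj x)⟩

variable [Abelian A] [Abelian A'']

lemma exists_l_obj_hom_cokernel (h'' : IsTorsionPair X'' Y'') (a : A) :
    ∃ (x : A'') (ξ : R.l.obj x ⟶ a), X'' x ∧ Y'' (R.π.obj (cokernel ξ)) := by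
  obtain ⟨x, y, f, g, w, hx, hy, hS⟩ := h''.exists_ses (R.π.obj a)
  let ξ := (R.adj_l.homEquiv x a).symm f
  have hξ : R.adj_l.unit.app x ≫ R.π.map ξ = f :=
    (R.adj_l.homEquiv_unit x a ξ).symm.trans (Equiv.apply_symm_apply _ f)
  refine ⟨x, ξ, hx, h''.f_iso ?_ hy⟩
  exact hS.gIsCokernel.coconePointUniqueUpToIso (cokernelIsCokernel f) ≪≫
    cokernelIsoOfEq hξ.symm ≪≫ cokernelEpiComp _ _ ≪≫ (PreservesCokernel.iso R.π ξ).symm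

noncomputable def πObjCokernelIso {x : A'} {c : A} (ψ : R.ι.obj x ⟶ c) :
    R.π.obj (cokernel ψ) ≅ R.π.obj c :=
  PreservesCokernel.iso R.π ψ ≪≫
    cokernelIsoOfEq ((R.isZero_π_obj_ι_obj x).eq_of_src _ _) ≪≫ cokernelZeroIsoTarget

variable [Abelian A']

lemma isClosedUnderQuotients_map_ι (h' : IsTorsionPair X' Y') :
    (X'.map R.ι).IsClosedUnderQuotients := by
  have := h'.isClosedUnderQuotients
  rw [R.map_ι_eq X']
  infer_instance

lemma isClosedUnderExtensions_map_ι (h' : IsTorsionPair X' Y') :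
    (X'.map R.ι).IsClosedUnderExtensions := by
  have := h'.isClosedUnderQuotients
  have := h'.isClosedUnderExtensions_inverseImage R.adj_q
  rw [R.map_ι_eq X']
  infer_instance

lemma isClosedUnderQuotients_gluedTorsion (h' : IsTorsionPair X' Y')
    (h'' : IsTorsionPair X'' Y'') : (R.gluedTorsion X' X'').IsClosedUnderQuotients := by
  have := h'.isClosedUnderQuotients
  have := h''.isClosedUnderQuotients
  unfold gluedTorsion
  infer_instance

lemma isClosedUnderExtensions_gluedTorsion (h' : IsTorsionPair X' Y')
    (h'' : IsTorsionPair X'' Y'') : (R.gluedTorsion X' X'').IsClosedUnderExtensions := by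
  have := h'.isClosedUnderExtensions_inverseImage R.adj_q
  have := h''.isClosedUnderExtensions
  unfold gluedTorsion
  infer_instance

lemma isClosedUnderSubobjects_gluedTorsionFree (h' : IsTorsionPair X' Y')
    (h'' : IsTorsionPair X'' Y'') : (R.gluedTorsionFree Y' Y'').IsClosedUnderSubobjects := by
  have := h'.isClosedUnderSubobjects
  have := h''.isClosedUnderSubobjects
  unfold gluedTorsionFree
  infer_instance

lemma l_obj_mem_gluedTorsion (h' : IsTorsionPair X' Y') (h'' : IsTorsionPair X'' Y'')
    {x : A''} (hx : X'' x) : R.gluedTorsion X' X'' (R.l.obj x) := by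
  refine ⟨?_, h''.t_iso (asIso (R.adj_l.unit.app x)) hx⟩
  rw [h'.inverseImage_eq_leftOrthogonal R.adj_q]
  rintro _ f ⟨y, -⟩
  exact (R.adj_l.homEquiv_eq_zero_iff f).1 ((R.isZero_π_obj_ι_obj y).eq_of_tgt _ _)

lemma r_obj_mem_gluedTorsionFree (h' : IsTorsionPair X' Y') (h'' : IsTorsionPair X'' Y'')
    {y : A''} (hy : Y'' y) : R.gluedTorsionFree Y' Y'' (R.r.obj y) := by
  refine ⟨?_, h''.f_iso (asIso (R.adj_r.counit.app y)).symm hy⟩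
  rw [h'.inverseImage_eq_rightOrthogonal R.adj_p]
  rintro _ f ⟨x, -⟩
  rw [← (R.adj_r.homEquiv _ _).apply_symm_apply f, R.adj_r.homEquiv_eq_zero_iff]
  exact (R.isZero_π_obj_ι_obj x).eq_of_src _ _

lemma isZero_of_gluedTorsion_of_gluedTorsionFree (h' : IsTorsionPair X' Y')
    (h'' : IsTorsionPair X'' Y'') {a : A} (hX : R.gluedTorsion X' X'' a)
    (hY : R.gluedTorsionFree Y' Y'' a) : IsZero a := by
  obtain ⟨x, ⟨e⟩⟩ := (R.im_eq_ker a).2 (h''.isZero_of_prop_of_prop hX.2 hY.2)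
  have hX' : X' x := h'.t_iso (R.q.mapIso e.symm ≪≫ asIso (R.adj_q.counit.app x)) hX.1
  have hY' : Y' x := h'.f_iso (R.p.mapIso e.symm ≪≫ (asIso (R.adj_p.unit.app x)).symm) hY.1
  exact (R.ι.map_isZero (h'.isZero_of_prop_of_prop hX' hY')).of_iso e.symm

lemma hom_eq_zero_of_gluedTorsion_of_gluedTorsionFree (h' : IsTorsionPair X' Y')
    (h'' : IsTorsionPair X'' Y'') {a b : A}
    (ha : R.gluedTorsion X' X'' a) (hb : R.gluedTorsionFree Y' Y'' b) (f : a ⟶ b) : f = 0 := by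
  have := R.isClosedUnderQuotients_gluedTorsion h' h''
  have := R.isClosedUnderSubobjects_gluedTorsionFree h' h''
  have hI : IsZero (Abelian.image f) := R.isZero_of_gluedTorsion_of_gluedTorsionFree h' h''
    ((R.gluedTorsion X' X'').prop_of_epi (Abelian.factorThruImage f) ha)
    ((R.gluedTorsionFree Y' Y'').prop_of_mono (Abelian.image.ι f) hb)
  rw [← Abelian.image.fac f, hI.eq_of_src (Abelian.image.ι f) 0, comp_zero]

lemma exists_ι_obj_hom_cokernel (h' : IsTorsionPair X' Y') (c : A) :
    ∃ (x : A') (ψ : R.ι.obj x ⟶ c), X' x ∧ Y' (R.p.obj (cokernel ψ)) := by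
  obtain ⟨x, y, f, g, w, hx, hy, hS⟩ := h'.exists_ses (R.p.obj c)
  let ψ := (R.adj_p.homEquiv x c).symm f
  refine ⟨x, ψ, hx, ?_⟩
  have hfac : ∀ ⦃b : A⦄ (φ : b ⟶ c), X'.map R.ι b → φ ≫ cokernel.π ψ = 0 := by
    rintro b φ ⟨W, hW, ⟨e⟩⟩
    obtain ⟨k, hk⟩ := KernelFork.IsLimit.lift' hS.fIsKernel
      (R.adj_p.homEquiv _ _ (e.hom ≫ φ)) (h'.hom_zero hW hy _)
    have hφ : e.hom ≫ φ = R.ι.map k ≫ ψ := by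
      rw [← (R.adj_p.homEquiv _ _).symm_apply_apply (e.hom ≫ φ), ← hk,
        Adjunction.homEquiv_naturality_left_symm]
      rfl
    rw [← cancel_epi e.hom, comp_zero, ← Category.assoc, hφ, Category.assoc,
      cokernel.condition, comp_zero]
  have := R.isClosedUnderQuotients_map_ι h'
  have := R.isClosedUnderExtensions_map_ι h'
  have hK := (shortExact_kernel (cokernel.π ψ)).rightOrthogonal_X₃ (B := X'.map R.ι)
    ((X'.map R.ι).prop_of_epi (Abelian.factorThruImage ψ) (X'.prop_map_obj R.ι hx)) hfac
  change Y'.inverseImage R.p _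
  rw [h'.inverseImage_eq_rightOrthogonal R.adj_p]
  rintro _ φ ⟨T, hT⟩
  exact hK φ (X'.prop_map_obj R.ι hT)

lemma exists_shortExact_gluedTorsion (h' : IsTorsionPair X' Y') (h'' : IsTorsionPair X'' Y'')
    (a : A) :
    ∃ (t e : A) (f : t ⟶ a) (g : a ⟶ e) (w : f ≫ g = 0),
      R.gluedTorsion X' X'' t ∧ R.gluedTorsionFree Y' Y'' e ∧
        (ShortComplex.mk f g w).ShortExact := by
  obtain ⟨x, ξ, hx, hc⟩ := R.exists_l_obj_hom_cokernel h'' a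
  obtain ⟨x', ψ, hx', he⟩ := R.exists_ι_obj_hom_cokernel h' (cokernel ξ)
  have := h'.isClosedUnderQuotients
  have := R.isClosedUnderQuotients_gluedTorsion h' h''
  have := R.isClosedUnderExtensions_gluedTorsion h' h''
  let θ := cokernel.π ξ ≫ cokernel.π ψ
  refine ⟨kernel θ, cokernel ψ, kernel.ι θ, θ, kernel.condition θ, ?_,
    ⟨he, h''.f_iso (R.πObjCokernelIso ψ).symm hc⟩, shortExact_kernel θ⟩
  refine (R.gluedTorsion X' X'').prop_X₂_of_shortExact
    (shortExact_kernel_comp (cokernel.π ξ) (cokernel.π ψ)) ?_ ?_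
  · exact (R.gluedTorsion X' X'').prop_of_epi (Abelian.factorThruImage ξ)
      (R.l_obj_mem_gluedTorsion h' h'' hx)
  · exact (R.gluedTorsion X' X'').prop_of_epi (Abelian.factorThruImage ψ)
      (R.ι_obj_mem_gluedTorsion h'' hx')

lemma isTorsionPair_gluedTorsion (h' : IsTorsionPair X' Y') (h'' : IsTorsionPair X'' Y'') :
    IsTorsionPair (R.gluedTorsion X' X'') (R.gluedTorsionFree Y' Y'') where
  t_iso e ha := ⟨h'.t_iso (R.q.mapIso e) ha.1, h''.t_iso (R.π.mapIso e) ha.2⟩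
  f_iso e hb := ⟨h'.f_iso (R.p.mapIso e) hb.1, h''.f_iso (R.π.mapIso e) hb.2⟩
  hom_zero := R.hom_eq_zero_of_gluedTorsion_of_gluedTorsionFree h' h''
  exists_ses := R.exists_shortExact_gluedTorsion h' h''

end RecollementData

end Paper

/-- Psaroudakis; gluing of torsion pairs. In a recollement
of abelian categories `R(A', A, A'')`, torsion pairs `(X', Y')` in `A'` and
`(X'', Y'')` in `A''` glue to the torsion pair
`X = {a | q(a) ∈ X', π(a) ∈ X''}`, `Y = {a | p(a) ∈ Y', π(a) ∈ Y''}` in `A`,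
compatible with the recollement: `ℓπ(X) ⊆ X` and `rπ(Y) ⊆ Y`. -/
theorem statement7
    {A' : Type u} [Category.{v} A'] [Abelian A']
    {A : Type u₁} [Category.{v₁} A] [Abelian A]
    {A'' : Type u₂} [Category.{v₂} A''] [Abelian A'']
    (R : RecollementData A' A A'')
    (X' Y' : A' → Prop) (X'' Y'' : A'' → Prop)
    (h' : IsTorsionPair X' Y') (h'' : IsTorsionPair X'' Y'') :
    IsTorsionPair (fun a : A => X' (R.q.obj a) ∧ X'' (R.π.obj a))
        (fun a : A => Y' (R.p.obj a) ∧ Y'' (R.π.obj a)) ∧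
    (∀ a : A, (X' (R.q.obj a) ∧ X'' (R.π.obj a)) →
      (X' (R.q.obj (R.l.obj (R.π.obj a))) ∧ X'' (R.π.obj (R.l.obj (R.π.obj a))))) ∧
    (∀ a : A, (Y' (R.p.obj a) ∧ Y'' (R.π.obj a)) →
      (Y' (R.p.obj (R.r.obj (R.π.obj a))) ∧ Y'' (R.π.obj (R.r.obj (R.π.obj a))))) :=
  ⟨R.isTorsionPair_gluedTorsion h' h'',
    fun _ ha => R.l_obj_mem_gluedTorsion h' h'' ha.2,
    fun _ ha => R.r_obj_mem_gluedTorsionFree h' h'' ha.2⟩
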